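/- Let Φ : ℝ³ → ℝ³ be a twice continuously differentiable map with Jacobian matrix M(ξ), M i j = ∂Φᵢ/∂ξⱼ. Then every column of the adjugate of M is divergence-free: for each index j, Σ_{i=1}^{3} ∂/∂ξᵢ [ (adjugate(M)) i j ] = 0 at every point. -/

import Mathlib

/-! In three dimensions the `j`-th column of `adjugate M` is the cross product of the rows
`j + 1` and `j + 2` (indices mod 3) of `M`; for a Jacobian these rows are the gradients of
`Φ (j + 1)` and `Φ (j + 2)`. Since `div (∇f × ∇g) = ∇g · curl ∇f - ∇f · curl ∇g`, the column is
divergence-free by the symmetry of second derivatives. -/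

/-- Partial derivative of `f : (Fin 3 → ℝ) → ℝ` in the `i`-th coordinate direction. -/
noncomputable def pd (i : Fin 3) (f : (Fin 3 → ℝ) → ℝ) (p : Fin 3 → ℝ) : ℝ :=
  fderiv ℝ f p (Pi.single i 1)

/-- Jacobian matrix `M i j = ∂Φᵢ/∂ξⱼ` of a map `Φ : ℝ³ → ℝ³`. -/
noncomputable def jac (Φ : (Fin 3 → ℝ) → (Fin 3 → ℝ)) (p : Fin 3 → ℝ) :
    Matrix (Fin 3) (Fin 3) ℝ :=
  Matrix.of fun i j : Fin 3 => pd j (fun q => Φ q i) p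

open Matrix

theorem Matrix.adjugate_fin_three_apply_eq_cross {R : Type*} [CommRing R]
    (A : Matrix (Fin 3) (Fin 3) R) (i j : Fin 3) :
    A.adjugate i j = (A (j + 1) ⨯₃ A (j + 2)) i := by
  rw [adjugate_fin_three, cross_apply]
  fin_cases i <;> fin_cases j <;> simp <;> ring

section PartialDerivatives

variable {f g : (Fin 3 → ℝ) → ℝ}

lemma differentiable_pd (hf : ContDiff ℝ 2 f) (i : Fin 3) : Differentiable ℝ (pd i f) :=
  ((hf.fderiv_right (m := 1) (by norm_num)).differentiable one_ne_zero).clm_apply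
    (differentiable_const _)

lemma pd_pd_comm (hf : ContDiff ℝ 2 f) (i j : Fin 3) (p : Fin 3 → ℝ) :
    pd i (pd j f) p = pd j (pd i f) p := by
  have hd : Differentiable ℝ (fderiv ℝ f) :=
    (hf.fderiv_right (m := 1) (by norm_num)).differentiable one_ne_zero
  have pd_pd_eq k l :
      pd k (pd l f) p = fderiv ℝ (fderiv ℝ f) p (Pi.single k 1) (Pi.single l 1) := by
    show fderiv ℝ (fun q => fderiv ℝ f q (Pi.single l 1)) p _ = _
    simp [fderiv_clm_apply hd.differentiableAt (differentiableAt_const _)]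
  rw [pd_pd_eq, pd_pd_eq, hf.contDiffAt.isSymmSndFDerivAt (by simp)]

lemma pd_mul_sub_mul {u v w x : (Fin 3 → ℝ) → ℝ} {p : Fin 3 → ℝ} (i : Fin 3)
    (hu : DifferentiableAt ℝ u p) (hv : DifferentiableAt ℝ v p)
    (hw : DifferentiableAt ℝ w p) (hx : DifferentiableAt ℝ x p) :
    pd i (fun q => u q * v q - w q * x q) p =
      pd i u p * v p + u p * pd i v p - (pd i w p * x p + w p * pd i x p) := by
  simp [pd, fderiv_fun_sub (hu.fun_mul hv) (hw.fun_mul hx), fderiv_fun_mul hu hv,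
    fderiv_fun_mul hw hx]
  ring

theorem sum_pd_cross_pd_eq_zero (hf : ContDiff ℝ 2 f) (hg : ContDiff ℝ 2 g) (p : Fin 3 → ℝ) :
    ∑ i, pd i (fun q => ((fun k => pd k f q) ⨯₃ (fun k => pd k g q)) i) p = 0 := by
  have hf' k : DifferentiableAt ℝ (pd k f) p := (differentiable_pd hf k).differentiableAt
  have hg' k : DifferentiableAt ℝ (pd k g) p := (differentiable_pd hg k).differentiableAt
  simp only [cross_apply, Fin.sum_univ_three, cons_val,
    pd_mul_sub_mul _ (hf' _) (hg' _) (hf' _) (hg' _)]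
  simp only [pd_pd_comm hf 1 0, pd_pd_comm hf 2 0, pd_pd_comm hf 2 1,
    pd_pd_comm hg 1 0, pd_pd_comm hg 2 0, pd_pd_comm hg 2 1]
  ring

end PartialDerivatives

/-- Piola identity: every column of the adjugate of the Jacobian matrix of a
`C²` map `Φ : ℝ³ → ℝ³` is divergence-free. -/
theorem piola_identity (Φ : (Fin 3 → ℝ) → (Fin 3 → ℝ)) (hΦ : ContDiff ℝ 2 Φ) :
    ∀ (j : Fin 3) (p : Fin 3 → ℝ),
      ∑ i : Fin 3, pd i (fun q => (jac Φ q).adjugate i j) p = 0 := by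
  intro j p
  simp only [adjugate_fin_three_apply_eq_cross]
  exact sum_pd_cross_pd_eq_zero (contDiff_pi.1 hΦ _) (contDiff_pi.1 hΦ _) p
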